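/- Let D, ω, ε > 0 and η ∈ ℝ, and let B : ℝ² → ℝ be twice continuously differentiable, ρ : ℝ² → ℝ and A^st : ℝ² → ℝ any functions, with A = A^st + B. For Δt > 0 set h = √(DΔt) and θ = ε/Δt, and define the one-step attractiveness update at x ∈ ℝ² by U_{Δt}(x) = [B(x) + (η h²/4)·Δ_h B(x)]·(1 − ωΔt) + θ·h²·ρ(x)·(1 − e^{−A(x)Δt}). Then for every x ∈ ℝ², lim_{Δt → 0⁺} (U_{Δt}(x) − B(x))/Δt = (ηD/4)·ΔB(x) − ω·B(x) + εD·ρ(x)·A(x), where ΔB is the (continuous) Laplacian of B. -/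

import Mathlib

/-!
Since `h² = DΔt`, the increment quotient is, for `Δt > 0`, exactly
`(ηD/4)·Δ_h B(x)·(1 − ωΔt) − ωB(x) + εDρ(x)·(1 − e^{−A(x)Δt})/Δt`.
The last quotient is a difference quotient of `t ↦ 1 − e^{−A(x)t}` at `0`, so it tends to `A(x)`.
Along each coordinate line `g(t) = B(x + t·eᵢ)`, the central second difference quotient
`(g(h) + g(−h) − 2g(0))/h²` tends to `g''(0)` by one application of L'Hôpital's rule, the
quotient of derivatives `(g'(h) − g'(−h))/(2h)` being a slope of the odd part of `g'` at `0`.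
Summing the two directions gives `Δ_h B(x) → ΔB(x)`.
-/

/-- First partial derivative of `f : ℝ² → ℝ` (direction `e₁`). -/
noncomputable def pd1 (f : ℝ × ℝ → ℝ) (x : ℝ × ℝ) : ℝ := fderiv ℝ f x (1, 0)

/-- Second partial derivative of `f : ℝ² → ℝ` (direction `e₂`). -/
noncomputable def pd2 (f : ℝ × ℝ → ℝ) (x : ℝ × ℝ) : ℝ := fderiv ℝ f x (0, 1)

/-- Continuous Laplacian `Δf = ∂₁₁f + ∂₂₂f` of `f : ℝ² → ℝ`. -/
noncomputable def lapl (f : ℝ × ℝ → ℝ) (x : ℝ × ℝ) : ℝ :=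
  pd1 (pd1 f) x + pd2 (pd2 f) x

/-- Discrete 5-point Laplacian with mesh size `h`:
`Δ_h f(x) = h⁻²(f(x+he₁)+f(x−he₁)+f(x+he₂)+f(x−he₂) − 4f(x))`. -/
noncomputable def discLap (h : ℝ) (f : ℝ × ℝ → ℝ) (x : ℝ × ℝ) : ℝ :=
  (f (x.1 + h, x.2) + f (x.1 - h, x.2) + f (x.1, x.2 + h) + f (x.1, x.2 - h)
    - 4 * f x) / h ^ 2

open Filter Topology

theorem HasDerivAt.comp_neg {𝕜 F : Type*} [NontriviallyNormedField 𝕜] [NormedAddCommGroup F]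
    [NormedSpace 𝕜 F] {f : 𝕜 → F} {f' : F} {x : 𝕜} (hf : HasDerivAt f f' (-x)) :
    HasDerivAt (fun t ↦ f (-t)) (-f') x := by
  have := hf.scomp x (hasDerivAt_neg x)
  rwa [neg_one_smul] at this

theorem tendsto_centralSecondDiff_div_sq {g : ℝ → ℝ} {c : ℝ} (hg : Differentiable ℝ g)
    (hg' : HasDerivAt (deriv g) c 0) :
    Tendsto (fun h ↦ (g h + g (-h) - 2 * g 0) / h ^ 2) (𝓝[>] 0) (𝓝 c) := by
  have hodd : HasDerivAt (fun t ↦ deriv g t - deriv g (-t)) (2 * c) 0 := by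
    have := hg'.sub (HasDerivAt.comp_neg (by rwa [neg_zero]))
    rwa [sub_neg_eq_add, ← two_mul] at this
  have hslope : Tendsto (fun t ↦ (deriv g t - deriv g (-t)) / (2 * t)) (𝓝[>] 0) (𝓝 c) := by
    convert hodd.tendsto_slope_zero_right.div_const 2 using 2 with t
    · simp only [zero_add, neg_zero, sub_self, sub_zero, smul_eq_mul]
      ring
    · ring
  have hcont : Continuous fun h ↦ g h + g (-h) - 2 * g 0 := by
    have := hg.continuous
    fun_prop
  refine HasDerivAt.lhopital_zero_nhdsGT (f' := fun t ↦ deriv g t - deriv g (-t))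
    (g' := fun t ↦ 2 * t) ?_ ?_ ?_ ?_ ?_ hslope
  · exact Eventually.of_forall fun t ↦
      ((hg t).hasDerivAt.add (hg (-t)).hasDerivAt.comp_neg).sub_const (2 * g 0)
  · exact Eventually.of_forall fun t ↦ by simpa using hasDerivAt_pow 2 t
  · filter_upwards [self_mem_nhdsWithin] with t ht
    exact mul_ne_zero two_ne_zero ht.ne'
  · exact (hcont.tendsto' 0 0 (by rw [neg_zero]; ring)).mono_left nhdsWithin_le_nhds
  · exact ((continuous_pow 2).tendsto' (0 : ℝ) 0 (by ring)).mono_left nhdsWithin_le_nhds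

theorem tendsto_centralSecondDiff_div_sq_of_fderiv {E : Type*} [NormedAddCommGroup E]
    [NormedSpace ℝ E] {f : E → ℝ} {x v : E}
    (hf : Differentiable ℝ f) (hf' : DifferentiableAt ℝ (fun y ↦ fderiv ℝ f y v) x) :
    Tendsto (fun h : ℝ ↦ (f (x + h • v) + f (x - h • v) - 2 * f x) / h ^ 2) (𝓝[>] 0)
      (𝓝 (fderiv ℝ (fun y ↦ fderiv ℝ f y v) x v)) := by
  have hline (t : ℝ) : HasDerivAt (fun s : ℝ ↦ x + s • v) v t := by
    have hsmul : HasDerivAt (fun s : ℝ ↦ s • v) ((1 : ℝ) • v) t := (hasDerivAt_id t).smul_const v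
    simpa using hsmul.const_add x
  have hderiv (t : ℝ) : HasDerivAt (fun s : ℝ ↦ f (x + s • v)) (fderiv ℝ f (x + t • v) v) t :=
    (hf _).hasFDerivAt.comp_hasDerivAt t (hline t)
  have hderiv2 : HasDerivAt (deriv fun s : ℝ ↦ f (x + s • v))
      (fderiv ℝ (fun y ↦ fderiv ℝ f y v) x v) 0 := by
    refine HasDerivAt.congr_of_eventuallyEq ?_ (Eventually.of_forall fun t ↦ (hderiv t).deriv)
    have hp : HasFDerivAt (fun y ↦ fderiv ℝ f y v) (fderiv ℝ (fun y ↦ fderiv ℝ f y v) x)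
        (x + (0 : ℝ) • v) := by
      rw [zero_smul, add_zero]
      exact hf'.hasFDerivAt
    exact hp.comp_hasDerivAt 0 (hline 0)
  convert tendsto_centralSecondDiff_div_sq (fun t ↦ (hderiv t).differentiableAt) hderiv2
    using 4 <;> simp [sub_eq_add_neg]

theorem tendsto_discLap {f : ℝ × ℝ → ℝ} (hf : ContDiff ℝ 2 f) (x : ℝ × ℝ) :
    Tendsto (fun h ↦ discLap h f x) (𝓝[>] 0) (𝓝 (lapl f x)) := by
  have hf' (v : ℝ × ℝ) : Differentiable ℝ fun y ↦ fderiv ℝ f y v :=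
    ((hf.fderiv_right (m := 1) le_rfl).clm_apply contDiff_const).differentiable one_ne_zero
  refine ((tendsto_centralSecondDiff_div_sq_of_fderiv (hf.differentiable two_ne_zero)
    (hf' (1, 0) x)).add (tendsto_centralSecondDiff_div_sq_of_fderiv
      (hf.differentiable two_ne_zero) (hf' (0, 1) x))).congr fun h ↦ ?_
  obtain ⟨x₁, x₂⟩ := x
  simp only [discLap, Prod.smul_mk, smul_eq_mul, mul_one, mul_zero, Prod.mk_add_mk,
    Prod.mk_sub_mk, add_zero, sub_zero]
  ring

theorem tendsto_one_sub_exp_neg_mul_div (a : ℝ) :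
    Tendsto (fun t ↦ (1 - Real.exp (-a * t)) / t) (𝓝[≠] 0) (𝓝 a) := by
  have hd : HasDerivAt (fun t ↦ 1 - Real.exp (-a * t)) a 0 := by
    simpa using (((hasDerivAt_id (0 : ℝ)).const_mul (-a)).exp).const_sub 1
  refine hd.tendsto_slope_zero.congr fun t ↦ ?_
  simp [div_eq_inv_mul]

theorem tendsto_sqrt_const_mul_nhdsGT {D : ℝ} (hD : 0 < D) :
    Tendsto (fun t ↦ √(D * t)) (𝓝[>] 0) (𝓝[>] 0) := by
  refine tendsto_nhdsWithin_of_tendsto_nhds_of_eventually_within _ ?_ ?_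
  · have hcont : Continuous fun t ↦ √(D * t) := by fun_prop
    exact (hcont.tendsto' 0 0 (by simp)).mono_left nhdsWithin_le_nhds
  · filter_upwards [self_mem_nhdsWithin] with t ht using Real.sqrt_pos.mpr (mul_pos hD ht)

theorem stmt4_general (D ω ε η : ℝ) (hD : 0 < D)
    (B ρ : ℝ × ℝ → ℝ) (hB : ContDiff ℝ 2 B)
    (A : ℝ × ℝ → ℝ)
    (U : ℝ → (ℝ × ℝ) → ℝ)
    (hU : U = fun Δt x =>
      (B x + η * Real.sqrt (D * Δt) ^ 2 / 4 * discLap (Real.sqrt (D * Δt)) B x)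
          * (1 - ω * Δt)
        + (ε / Δt) * Real.sqrt (D * Δt) ^ 2 * ρ x * (1 - Real.exp (-A x * Δt)))
    (x : ℝ × ℝ) :
    Filter.Tendsto (fun Δt : ℝ => (U Δt x - B x) / Δt)
      (nhdsWithin (0 : ℝ) (Set.Ioi 0))
      (nhds (η * D / 4 * lapl B x - ω * B x + ε * D * ρ x * A x)) := by
  have hquot : ∀ᶠ Δt in 𝓝[>] (0 : ℝ),
      η * D / 4 * discLap √(D * Δt) B x * (1 - ω * Δt) - ω * B x
        + ε * D * ρ x * ((1 - Real.exp (-A x * Δt)) / Δt) = (U Δt x - B x) / Δt := by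
    filter_upwards [self_mem_nhdsWithin] with Δt (hΔt : 0 < Δt)
    simp only [hU, Real.sq_sqrt (mul_pos hD hΔt).le]
    field_simp
    ring
  have hlap := (tendsto_discLap hB x).comp (tendsto_sqrt_const_mul_nhdsGT hD)
  have hexp := (tendsto_one_sub_exp_neg_mul_div (A x)).mono_left (nhdsGT_le_nhdsNE 0)
  have hdamp : Tendsto (fun Δt : ℝ ↦ 1 - ω * Δt) (𝓝[>] 0) (𝓝 1) :=
    ((continuous_const.sub (continuous_const.mul continuous_id)).tendsto' 0 1
      (by simp)).mono_left nhdsWithin_le_nhds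
  refine Tendsto.congr' hquot ?_
  simpa using (((hlap.const_mul (η * D / 4)).mul hdamp).sub_const (ω * B x)).add
    (hexp.const_mul (ε * D * ρ x))

/-- Mean-field limit of the agent-based attractiveness update: with `h = √(DΔt)` and
`θ = ε/Δt`, the one-step increment quotient of
`U_Δt = [B + (ηh²/4)Δ_h B](1 − ωΔt) + θh²ρ(1 − e^{−AΔt})` tends, as `Δt → 0⁺`, to
`(ηD/4)ΔB − ωB + εDρA`. -/
theorem stmt4 (D ω ε η : ℝ) (hD : 0 < D) (hω : 0 < ω) (hε : 0 < ε)
    (B ρ Ast : ℝ × ℝ → ℝ) (hB : ContDiff ℝ 2 B)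
    (A : ℝ × ℝ → ℝ) (hA : A = fun x => Ast x + B x)
    (U : ℝ → (ℝ × ℝ) → ℝ)
    (hU : U = fun Δt x =>
      (B x + η * Real.sqrt (D * Δt) ^ 2 / 4 * discLap (Real.sqrt (D * Δt)) B x)
          * (1 - ω * Δt)
        + (ε / Δt) * Real.sqrt (D * Δt) ^ 2 * ρ x * (1 - Real.exp (-A x * Δt)))
    (x : ℝ × ℝ) :
    Filter.Tendsto (fun Δt : ℝ => (U Δt x - B x) / Δt)
      (nhdsWithin (0 : ℝ) (Set.Ioi 0))
      (nhds (η * D / 4 * lapl B x - ω * B x + ε * D * ρ x * A x)) :=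
  stmt4_general D ω ε η hD B ρ hB A U hU x
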